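/- If 𝓝 is a normalized family of sets, then J(𝓝)* is independent. Consequently, every normalized family is the dual of an independent family. -/
import Mathlib


/-- The universe `U(𝓕)` of a finite family of finite sets: the union of its members. -/
def famUniv (F : Finset (Finset ℕ)) : Finset ℕ := F.sup id

/-- `𝓕_a = {F ∈ 𝓕 : a ∈ F}`. -/
def famAt (F : Finset (Finset ℕ)) (a : ℕ) : Finset (Finset ℕ) := F.filter (fun X => a ∈ X)

/-- `𝓕` is union-closed. -/
def unionClosed (F : Finset (Finset ℕ)) : Prop := ∀ A ∈ F, ∀ B ∈ F, A ∪ B ∈ F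

/-- `𝓕` is separating if `𝓕_a ≠ 𝓕_b` for all distinct `a, b ∈ U(𝓕)`. -/
def separating (F : Finset (Finset ℕ)) : Prop :=
  ∀ a ∈ famUniv F, ∀ b ∈ famUniv F, a ≠ b → famAt F a ≠ famAt F b

/-- `𝓕` is normalized: separating, union-closed, `∅ ∈ 𝓕` and `|𝓕| = |U(𝓕)| + 1`. -/
def normalized (F : Finset (Finset ℕ)) : Prop :=
  separating F ∧ unionClosed F ∧ ∅ ∈ F ∧ F.card = (famUniv F).card + 1

/-- `𝓕` is independent. -/
def independent (F : Finset (Finset ℕ)) : Prop :=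
  ∀ a ∈ famUniv F, ∀ S ⊆ famUniv F \ {a},
    (∃ O ∈ F, a ∉ O ∧ (O ∩ S).Nonempty) ∨ (∃ O ∈ F, a ∈ O ∧ O ∩ S = ∅)

/-- `𝓖` is a generating subfamily of `𝓕`: `𝓖 ⊆ 𝓕` and every member of `𝓕` is a union
of members of `𝓖` (the empty union giving `∅`). -/
def generates (G F : Finset (Finset ℕ)) : Prop :=
  G ⊆ F ∧ ∀ X ∈ F, ∃ T ⊆ G, X = T.sup id

/-- The union-closed family generated by `𝓖`: all unions of subfamilies of `𝓖`
(including the empty union `∅`). -/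
def gen (G : Finset (Finset ℕ)) : Finset (Finset ℕ) :=
  G.powerset.image (fun T => T.sup id)

/-- `J(𝓕)`: the non-empty irreducible members of `𝓕`. -/
def J (F : Finset (Finset ℕ)) : Finset (Finset ℕ) :=
  F.filter (fun I => I ≠ ∅ ∧ ∀ A ∈ F, ∀ B ∈ F, I = A ∪ B → A = I ∨ B = I)

/-- `H : ℕ → Finset ℕ` is an indexing `H_1, …, H_s` of `𝓛 \ {∅}`. -/
def isIndexing (L : Finset (Finset ℕ)) (s : ℕ) (H : ℕ → Finset ℕ) : Prop :=
  Set.InjOn H (Finset.Icc 1 s) ∧ (Finset.Icc 1 s).image H = L.erase ∅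

/-- `𝓗^{ι_j} = {i ∈ [s] : j ∈ H_i}`. -/
def iota (s : ℕ) (H : ℕ → Finset ℕ) (j : ℕ) : Finset ℕ :=
  (Finset.Icc 1 s).filter (fun i => j ∈ H i)

/-- The dual family: the union-closed family (containing `∅`) generated by
`{𝓗^{ι_1}, …, 𝓗^{ι_m}}`, where `H` indexes `𝓛 \ {∅}` as `H_1, …, H_s` and `U(𝓛) = [m]`. -/
def dualFam (m s : ℕ) (H : ℕ → Finset ℕ) : Finset (Finset ℕ) :=
  gen ((Finset.Icc 1 m).image (iota s H))

lemma mem_famUniv {F : Finset (Finset ℕ)} {a : ℕ} :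
    a ∈ famUniv F ↔ ∃ X ∈ F, a ∈ X := by
  simp [famUniv, Finset.mem_sup]

lemma subset_famUniv {F : Finset (Finset ℕ)} {X : Finset ℕ} (h : X ∈ F) :
    X ⊆ famUniv F := fun x hx => mem_famUniv.2 ⟨X, h, hx⟩

lemma sup_mem {N : Finset (Finset ℕ)} (hu : unionClosed N) (he : ∅ ∈ N) :
    ∀ T ⊆ N, T.sup id ∈ N := by
  intro T
  induction T using Finset.induction_on with
  | empty => intro _; simpa using he
  | @insert x T hx ih =>
    intro hsub
    rw [Finset.sup_insert]
    exact hu _ (hsub (Finset.mem_insert_self _ _)) _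
      (ih (fun y hy => hsub (Finset.mem_insert_of_mem hy)))

lemma J_subset {N : Finset (Finset ℕ)} : J N ⊆ N := Finset.filter_subset _ _

lemma empty_notMem_J {N : Finset (Finset ℕ)} : ∅ ∉ J N := by
  intro h
  exact (Finset.mem_filter.1 h).2.1 rfl

lemma irred_sup {N : Finset (Finset ℕ)} {I : Finset ℕ} (hu : unionClosed N) (he : ∅ ∈ N)
    (hI : I ∈ J N) : ∀ T ⊆ N, T.sup id = I → ∃ X ∈ T, X = I := by
  intro T
  induction T using Finset.induction_on with
  | empty =>
    intro _ h
    exfalso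
    simp only [Finset.sup_empty, Finset.bot_eq_empty] at h
    exact (Finset.mem_filter.1 hI).2.1 h.symm
  | @insert x T hx ih =>
    intro hsub heq
    rw [Finset.sup_insert] at heq
    have h1 : x ∈ N := hsub (Finset.mem_insert_self _ _)
    have hTs : T ⊆ N := fun y hy => hsub (Finset.mem_insert_of_mem hy)
    have h2 : T.sup id ∈ N := sup_mem hu he T hTs
    rcases (Finset.mem_filter.1 hI).2.2 x h1 (T.sup id) h2 heq.symm with h | h
    · exact ⟨x, Finset.mem_insert_self _ _, h⟩
    · obtain ⟨X, hX, hXI⟩ := ih hTs h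
      exact ⟨X, Finset.mem_insert_of_mem hX, hXI⟩

lemma exists_sup_J {N : Finset (Finset ℕ)} (hu : unionClosed N) :
    ∀ F, F ∈ N → ∃ T ⊆ J N, F = T.sup id := by
  intro F
  induction F using Finset.strongInductionOn with
  | _ F ih =>
    intro hF
    by_cases h0 : F = ∅
    · exact ⟨∅, Finset.empty_subset _, by simp [h0]⟩
    by_cases hirr : ∀ A ∈ N, ∀ B ∈ N, F = A ∪ B → A = F ∨ B = F
    · refine ⟨{F}, ?_, by simp⟩
      intro X hX
      rw [Finset.mem_singleton] at hX
      subst hX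
      exact Finset.mem_filter.2 ⟨hF, h0, hirr⟩
    · push_neg at hirr
      obtain ⟨A, hA, B, hB, hFAB, hAF, hBF⟩ := hirr
      have hAsub : A ⊂ F := lt_of_le_of_ne (by rw [hFAB]; exact Finset.subset_union_left) hAF
      have hBsub : B ⊂ F := lt_of_le_of_ne (by rw [hFAB]; exact Finset.subset_union_right) hBF
      obtain ⟨TA, hTA, hA'⟩ := ih A hAsub hA
      obtain ⟨TB, hTB, hB'⟩ := ih B hBsub hB
      exact ⟨TA ∪ TB, Finset.union_subset hTA hTB,
        by rw [Finset.sup_union, ← hA', ← hB', hFAB, Finset.sup_eq_union]⟩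

lemma mem_gen {G : Finset (Finset ℕ)} {X : Finset ℕ} :
    X ∈ gen G ↔ ∃ T ⊆ G, X = T.sup id := by
  simp only [gen, Finset.mem_image, Finset.mem_powerset]
  constructor
  · rintro ⟨T, hT, rfl⟩; exact ⟨T, hT, rfl⟩
  · rintro ⟨T, hT, rfl⟩; exact ⟨T, hT, rfl⟩

lemma gen_J {N : Finset (Finset ℕ)} (hu : unionClosed N) (he : ∅ ∈ N) : gen (J N) = N := by
  ext X
  rw [mem_gen]
  constructor
  · rintro ⟨T, hT, rfl⟩; exact sup_mem hu he T (hT.trans J_subset)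
  · exact exists_sup_J hu X

lemma gen_unionClosed (G : Finset (Finset ℕ)) : unionClosed (gen G) := by
  intro A hA B hB
  rw [mem_gen] at hA hB ⊢
  obtain ⟨TA, hTA, rfl⟩ := hA
  obtain ⟨TB, hTB, rfl⟩ := hB
  exact ⟨TA ∪ TB, Finset.union_subset hTA hTB, (Finset.sup_union).symm⟩

lemma single_mem_gen {G : Finset (Finset ℕ)} {Y : Finset ℕ} (h : Y ∈ G) : Y ∈ gen G := by
  rw [mem_gen]
  exact ⟨{Y}, Finset.singleton_subset_iff.2 h, by simp⟩
lemma H_mem_J {s : ℕ} {N : Finset (Finset ℕ)} {H : ℕ → Finset ℕ}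
    (hH : isIndexing (J N) s H) {i : ℕ} (hi : i ∈ Finset.Icc 1 s) : H i ∈ J N := by
  have : H i ∈ (Finset.Icc 1 s).image H := Finset.mem_image_of_mem H hi
  rw [hH.2] at this
  exact Finset.mem_of_mem_erase this

lemma key_claim (n s : ℕ) (N : Finset (Finset ℕ)) (H : ℕ → Finset ℕ)
    (hnorm : normalized N) (hU : famUniv N = Finset.Icc 1 n)
    (hH : isIndexing (J N) s H) {T : Finset ℕ} (hT : T ⊆ Finset.Icc 1 n)
    (hne : T.Nonempty) : ∃ c ∈ Finset.Icc 1 n, T.sup (iota s H) = iota s H c := by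
  obtain ⟨hsep, hu, he, hcard⟩ := hnorm
  set D : ℕ → Finset ℕ := fun a => (N.filter (fun F => a ∉ F)).sup id with hD
  have hDmem : ∀ a, D a ∈ N := fun a => sup_mem hu he _ (Finset.filter_subset _ _)
  have hDnot : ∀ a, a ∉ D a := by
    intro a h
    rw [hD, Finset.mem_sup] at h
    obtain ⟨F, hF, haF⟩ := h
    exact (Finset.mem_filter.1 hF).2 haF
  have hmemD : ∀ a, ∀ F ∈ N, (a ∈ F ↔ ¬ F ⊆ D a) := by
    intro a F hF
    constructor
    · intro haF hsubs
      exact hDnot a (hsubs haF)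
    · intro h
      by_contra haF
      exact h (Finset.le_sup (f := id) (Finset.mem_filter.2 ⟨hF, haF⟩))
  set E : Finset ℕ := (N.filter (fun F => ∀ a ∈ T, F ⊆ D a)).sup id with hE
  have hEmem : E ∈ N := sup_mem hu he _ (Finset.filter_subset _ _)
  have hEsub : ∀ a ∈ T, E ⊆ D a := by
    intro a ha x hx
    rw [hE, Finset.mem_sup] at hx
    obtain ⟨F, hF, hxF⟩ := hx
    exact (Finset.mem_filter.1 hF).2 a ha hxF
  have hFE : ∀ F ∈ N, (F ⊆ E ↔ ∀ a ∈ T, F ⊆ D a) := by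
    intro F hF
    constructor
    · intro h a ha
      exact h.trans (hEsub a ha)
    · intro h
      exact Finset.le_sup (f := id) (Finset.mem_filter.2 ⟨hF, h⟩)
  have htopmem : famUniv N ∈ N := by simpa [famUniv] using sup_mem hu he N subset_rfl
  have hcardU : (famUniv N).card = n := by rw [hU]; simp
  -- D is injective on [n]
  have hDinj : Set.InjOn D (Finset.Icc 1 n) := by
    intro a ha b hb hab
    by_contra hne'
    refine hsep a (by rw [hU]; exact_mod_cast ha) b (by rw [hU]; exact_mod_cast hb) hne' ?_
    ext F
    simp only [famAt, Finset.mem_filter]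
    constructor
    · rintro ⟨hF, haF⟩
      refine ⟨hF, ?_⟩
      rw [hmemD b F hF, ← hab, ← hmemD a F hF]
      exact haF
    · rintro ⟨hF, hbF⟩
      refine ⟨hF, ?_⟩
      rw [hmemD a F hF, hab, ← hmemD b F hF]
      exact hbF
  have hDimage : (Finset.Icc 1 n).image D = N.erase (famUniv N) := by
    apply Finset.eq_of_subset_of_card_le
    · intro X hX
      rw [Finset.mem_image] at hX
      obtain ⟨a, ha, rfl⟩ := hX
      refine Finset.mem_erase.2 ⟨?_, hDmem a⟩
      intro h
      have : a ∈ famUniv N := by rw [hU]; exact ha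
      rw [← h] at this
      exact hDnot a this
    · rw [Finset.card_erase_of_mem htopmem, hcard, hcardU,
        Finset.card_image_of_injOn hDinj]
      simp
  have hEne : E ≠ famUniv N := by
    obtain ⟨a, ha⟩ := hne
    intro h
    have haU : a ∈ famUniv N := by rw [hU]; exact hT ha
    rw [← h] at haU
    exact hDnot a (hEsub a ha haU)
  have hEc : E ∈ (Finset.Icc 1 n).image D := by
    rw [hDimage]
    exact Finset.mem_erase.2 ⟨hEne, hEmem⟩
  rw [Finset.mem_image] at hEc
  obtain ⟨c, hc, hDc⟩ := hEc
  refine ⟨c, hc, ?_⟩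
  ext i
  simp only [Finset.mem_sup, iota, Finset.mem_filter]
  constructor
  · rintro ⟨a, haT, his, haH⟩
    refine ⟨his, ?_⟩
    have hHiN : H i ∈ N := J_subset (H_mem_J ⟨hH.1, hH.2⟩ his)
    rw [hmemD c (H i) hHiN, hDc]
    intro hsubE
    have := (hFE (H i) hHiN).1 hsubE a haT
    exact hDnot a (this haH)
  · rintro ⟨his, hcH⟩
    have hHiN : H i ∈ N := J_subset (H_mem_J ⟨hH.1, hH.2⟩ his)
    have hnsubE : ¬ H i ⊆ E := by
      rw [← hDc]
      exact (hmemD c (H i) hHiN).1 hcH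
    rw [hFE (H i) hHiN] at hnsubE
    push_neg at hnsubE
    obtain ⟨a, haT, hnsub⟩ := hnsubE
    exact ⟨a, haT, his, (hmemD a (H i) hHiN).2 hnsub⟩
theorem stmt14 (n s : ℕ) (N : Finset (Finset ℕ)) (hnorm : normalized N)
    (hU : famUniv N = Finset.Icc 1 n)
    (H : ℕ → Finset ℕ) (hH : isIndexing (J N) s H) :
    independent (dualFam n s H) ∧
    ∃ (m' s' : ℕ) (G : Finset (Finset ℕ)) (H' : ℕ → Finset ℕ),
      independent G ∧ unionClosed G ∧ famUniv G = Finset.Icc 1 m' ∧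
      isIndexing G s' H' ∧ dualFam m' s' H' = N := by
  obtain ⟨hsep, hu, he, hcard⟩ := hnorm
  have hJerase : (J N).erase ∅ = J N := Finset.erase_eq_of_notMem empty_notMem_J
  have hHimg : (Finset.Icc 1 s).image H = J N := by rw [hH.2, hJerase]
  have hHmemJ : ∀ i ∈ Finset.Icc 1 s, H i ∈ J N := fun i hi => H_mem_J hH hi
  have hHmemN : ∀ i ∈ Finset.Icc 1 s, H i ∈ N := fun i hi => J_subset (hHmemJ i hi)
  have hHsubU : ∀ i ∈ Finset.Icc 1 s, H i ⊆ Finset.Icc 1 n := by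
    intro i hi
    rw [← hU]
    exact subset_famUniv (hHmemN i hi)
  have hmem_sub : ∀ X ∈ dualFam n s H, X ⊆ Finset.Icc 1 s := by
    intro X hX
    rw [dualFam, mem_gen] at hX
    obtain ⟨T, hT, rfl⟩ := hX
    intro x hx
    rw [Finset.mem_sup] at hx
    obtain ⟨Y, hY, hxY⟩ := hx
    obtain ⟨j, _, rfl⟩ := Finset.mem_image.1 (hT hY)
    exact Finset.mem_of_mem_filter x hxY
  have hiota_mem : ∀ j ∈ Finset.Icc 1 n, iota s H j ∈ dualFam n s H := by
    intro j hj
    exact single_mem_gen (Finset.mem_image_of_mem _ hj)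
  have hiota_ne : ∀ j ∈ Finset.Icc 1 n, (iota s H j).Nonempty := by
    intro j hj
    have hjU : j ∈ famUniv N := by rw [hU]; exact hj
    obtain ⟨F, hF, hjF⟩ := mem_famUniv.1 hjU
    obtain ⟨T, hT, rfl⟩ := exists_sup_J hu F hF
    obtain ⟨X, hX, hjX⟩ := Finset.mem_sup.1 hjF
    obtain ⟨i, hi, rfl⟩ : ∃ i ∈ Finset.Icc 1 s, H i = X := by
      have : X ∈ (Finset.Icc 1 s).image H := by rw [hHimg]; exact hT hX
      obtain ⟨i, hi, rfl⟩ := Finset.mem_image.1 this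
      exact ⟨i, hi, rfl⟩
    exact ⟨i, Finset.mem_filter.2 ⟨hi, hjX⟩⟩
  have hUdual : famUniv (dualFam n s H) = Finset.Icc 1 s := by
    apply Finset.Subset.antisymm
    · intro x hx
      obtain ⟨X, hX, hxX⟩ := mem_famUniv.1 hx
      exact hmem_sub X hX hxX
    · intro i hi
      obtain ⟨j, hjHi⟩ := (Finset.mem_filter.1 (hHmemJ i hi)).2.1 |> fun h =>
        Finset.nonempty_iff_ne_empty.2 h
      have hjn : j ∈ Finset.Icc 1 n := hHsubU i hi hjHi
      exact mem_famUniv.2 ⟨iota s H j, hiota_mem j hjn, Finset.mem_filter.2 ⟨hi, hjHi⟩⟩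
  have hindep : independent (dualFam n s H) := by
    intro a ha S hS
    rw [hUdual] at ha hS
    have hSsub : ∀ i ∈ S, i ∈ Finset.Icc 1 s ∧ i ≠ a := by
      intro i hi
      have := hS hi
      rw [Finset.mem_sdiff, Finset.mem_singleton] at this
      exact ⟨this.1, this.2⟩
    by_cases hcase : ∀ i ∈ S, H i ⊆ H a
    · -- second disjunct
      right
      set W : Finset ℕ := (S.image H).sup id with hW
      have hWN : S.image H ⊆ N := by
        intro X hX
        obtain ⟨i, hi, rfl⟩ := Finset.mem_image.1 hX
        exact hHmemN i (hSsub i hi).1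
      have hWsub : W ⊆ H a := by
        intro x hx
        rw [hW, Finset.mem_sup] at hx
        obtain ⟨X, hX, hxX⟩ := hx
        obtain ⟨i, hi, rfl⟩ := Finset.mem_image.1 hX
        exact hcase i hi hxX
      have hWne : W ≠ H a := by
        intro heq
        obtain ⟨X, hX, hXa⟩ := irred_sup hu he (hHmemJ a ha) _ hWN heq
        obtain ⟨i, hi, rfl⟩ := Finset.mem_image.1 hX
        have : i = a := hH.1 (by exact_mod_cast (hSsub i hi).1) (by exact_mod_cast ha) hXa
        exact (hSsub i hi).2 this
      obtain ⟨j, hjHa, hjW⟩ := Finset.exists_of_ssubset (hWsub.ssubset_of_ne hWne)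
      have hjn : j ∈ Finset.Icc 1 n := hHsubU a ha hjHa
      refine ⟨iota s H j, hiota_mem j hjn, Finset.mem_filter.2 ⟨ha, hjHa⟩, ?_⟩
      rw [Finset.eq_empty_iff_forall_notMem]
      intro i hi
      rw [Finset.mem_inter] at hi
      have hjHi : j ∈ H i := (Finset.mem_filter.1 hi.1).2
      exact hjW (Finset.mem_sup.2 ⟨H i, Finset.mem_image_of_mem H hi.2, hjHi⟩)
    · -- first disjunct
      left
      push_neg at hcase
      obtain ⟨i, hiS, hni⟩ := hcase
      obtain ⟨j, hjHi, hjHa⟩ := Finset.not_subset.1 hni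
      have hjn : j ∈ Finset.Icc 1 n := hHsubU i (hSsub i hiS).1 hjHi
      refine ⟨iota s H j, hiota_mem j hjn, ?_, ?_⟩
      · intro hmem
        exact hjHa (Finset.mem_filter.1 hmem).2
      · exact ⟨i, Finset.mem_inter.2 ⟨Finset.mem_filter.2 ⟨(hSsub i hiS).1, hjHi⟩, hiS⟩⟩
  refine ⟨hindep, s, n, dualFam n s H, iota s H, hindep, gen_unionClosed _, hUdual, ?_, ?_⟩
  · -- isIndexing (dualFam n s H) n (iota s H)
    constructor
    · -- InjOn
      intro a ha b hb hab
      by_contra hne'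
      have haU : a ∈ famUniv N := by rw [hU]; exact_mod_cast ha
      have hbU : b ∈ famUniv N := by rw [hU]; exact_mod_cast hb
      refine hsep a haU b hbU hne' ?_
      have hdir : ∀ x y : ℕ, iota s H x = iota s H y → ∀ F ∈ N, x ∈ F → y ∈ F := by
        intro x y hxy F hF hxF
        obtain ⟨T, hT, rfl⟩ := exists_sup_J hu F hF
        obtain ⟨X, hX, hxX⟩ := Finset.mem_sup.1 hxF
        obtain ⟨i, hi, rfl⟩ : ∃ i ∈ Finset.Icc 1 s, H i = X := by
          have : X ∈ (Finset.Icc 1 s).image H := by rw [hHimg]; exact hT hX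
          obtain ⟨i, hi, rfl⟩ := Finset.mem_image.1 this
          exact ⟨i, hi, rfl⟩
        have hiix : i ∈ iota s H x := Finset.mem_filter.2 ⟨hi, hxX⟩
        rw [hxy] at hiix
        have hyHi : y ∈ H i := (Finset.mem_filter.1 hiix).2
        exact Finset.mem_sup.2 ⟨H i, hX, hyHi⟩
      ext F
      simp only [famAt, Finset.mem_filter]
      constructor
      · rintro ⟨hF, haF⟩
        exact ⟨hF, hdir a b hab F hF haF⟩
      · rintro ⟨hF, hbF⟩
        exact ⟨hF, hdir b a hab.symm F hF hbF⟩
    · -- image = erase ∅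
      apply Finset.Subset.antisymm
      · intro X hX
        obtain ⟨j, hj, rfl⟩ := Finset.mem_image.1 hX
        refine Finset.mem_erase.2 ⟨?_, hiota_mem j hj⟩
        exact Finset.nonempty_iff_ne_empty.1 (hiota_ne j hj)
      · intro X hX
        rw [Finset.mem_erase] at hX
        obtain ⟨hXne, hXmem⟩ := hX
        rw [dualFam, mem_gen] at hXmem
        obtain ⟨T', hT', rfl⟩ := hXmem
        set T : Finset ℕ := (Finset.Icc 1 n).filter (fun j => iota s H j ∈ T') with hTdef
        have hTimg : T.image (iota s H) = T' := by
          apply Finset.Subset.antisymm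
          · intro Y hY
            obtain ⟨j, hj, rfl⟩ := Finset.mem_image.1 hY
            exact (Finset.mem_filter.1 hj).2
          · intro Y hY
            obtain ⟨j, hj, rfl⟩ := Finset.mem_image.1 (hT' hY)
            exact Finset.mem_image_of_mem _ (Finset.mem_filter.2 ⟨hj, hY⟩)
        have hsupeq : T'.sup id = T.sup (iota s H) := by
          rw [← hTimg, Finset.sup_image]
          rfl
        have hTn : T.Nonempty := by
          rw [Finset.nonempty_iff_ne_empty]
          intro h
          apply hXne
          rw [hsupeq, h]
          simp
        obtain ⟨c, hc, hceq⟩ := key_claim n s N H ⟨hsep, hu, he, hcard⟩ hU hH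
          (Finset.filter_subset _ _) hTn
        rw [hsupeq, hceq]
        exact Finset.mem_image_of_mem _ hc
  · -- dualFam s n (iota s H) = N
    have himg : (Finset.Icc 1 s).image (iota n (iota s H)) = (Finset.Icc 1 s).image H := by
      apply Finset.image_congr
      intro i hi
      ext j
      simp only [iota, Finset.mem_filter]
      constructor
      · rintro ⟨_, _, hjHi⟩
        exact hjHi
      · intro hjHi
        exact ⟨hHsubU i (by exact_mod_cast hi) hjHi, by exact_mod_cast hi, hjHi⟩
    rw [dualFam, himg, hHimg, gen_J hu he]
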